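/- Let F ∈ 𝓒 be a contractive n×n matrix. Then ‖F‖₂² ≤ −log det(Id − F·F*). If in addition ‖F‖_∞² ≤ 1 − e^{−1}, then −log det(Id − F·F*) ≤ 2·‖F‖₂². -/

import Mathlib

open MeasureTheory Matrix Filter
open scoped Real ENNReal Topology ComplexOrder

noncomputable section

namespace NLFT

instance : MeasurableSpace Circle := borel Circle
instance : BorelSpace Circle := ⟨rfl⟩

/-- The Haar probability measure on the unit circle `𝕋`. -/
def μ : Measure Circle :=
  Measure.map AddCircle.toCircle (@AddCircle.haarAddCircle (2 * Real.pi) ⟨Real.two_pi_pos⟩)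

/-- `n × n` complex matrices. -/
abbrev Mat (n : ℕ) := Matrix (Fin n) (Fin n) ℂ

/-- `2n × 2n` complex matrices, written in `2 × 2` block form. -/
abbrev Mat2 (n : ℕ) := Matrix (Fin n ⊕ Fin n) (Fin n ⊕ Fin n) ℂ

/-- The Hilbert–Schmidt norm `‖·‖₂` of a matrix. -/
def hsNorm {ι κ : Type*} [Fintype ι] [Fintype κ] (M : Matrix ι κ ℂ) : ℝ :=
  Real.sqrt (∑ i, ∑ j, ‖M i j‖ ^ 2)

/-- The operator norm `‖·‖_∞` (largest singular value) of a matrix. -/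
def opNorm {ι : Type*} [Fintype ι] [DecidableEq ι] (M : Matrix ι ι ℂ) : ℝ :=
  ‖toEuclideanCLM (𝕜 := ℂ) M‖

/-- A matrix is contractive if its operator norm is `< 1`. -/
def Contractive {ι : Type*} [Fintype ι] [DecidableEq ι] (M : Matrix ι ι ℂ) : Prop :=
  opNorm M < 1

/-- Membership in `𝓖₀` (upper triangular, `a = 0`) or `𝓖₁` (lower triangular, `a = 1`):
triangular with strictly positive (real) diagonal entries. -/
def Triangular {n : ℕ} (a : Fin 2) (M : Mat n) : Prop :=
  (∀ i j : Fin n, (if a = 0 then j < i else i < j) → M i j = 0) ∧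
  ∀ i, 0 < (M i i).re ∧ (M i i).im = 0

/-- A square matrix is unitary. -/
def IsUnitary {ι : Type*} [Fintype ι] [DecidableEq ι] (M : Matrix ι ι ℂ) : Prop :=
  Mᴴ * M = 1

/-- A square matrix is special unitary. -/
def IsSU {ι : Type*} [Fintype ι] [DecidableEq ι] (M : Matrix ι ι ℂ) : Prop :=
  IsUnitary M ∧ M.det = 1

/-- Membership in `SU_α(2n)`. -/
def IsSUa {n : ℕ} (α : Fin 2 → Fin 2) (M : Mat2 n) : Prop :=
  IsSU M ∧ Triangular (α 0) M.toBlocks₁₁ ∧ Triangular (α 1) M.toBlocks₂₂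

/-- The `k`-th Fourier coefficient `X̂(k) = ∫_𝕋 X(z) z^{-k}` of a matrix-valued function,
computed entrywise. -/
def mFourierCoeff {ι κ : Type*} [Fintype ι] [Fintype κ] (X : Circle → Matrix ι κ ℂ) (k : ℤ) :
    Matrix ι κ ℂ :=
  Matrix.of fun i j => ∫ z : Circle, (z : ℂ) ^ (-k) * X z i j ∂μ

/-- All entries square integrable on the circle. -/
def MemL2 {ι κ : Type*} [Fintype ι] [Fintype κ] (X : Circle → Matrix ι κ ℂ) : Prop :=
  ∀ i j, MemLp (fun z => X z i j) 2 μ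

/-- Membership in the matrix Hardy space `H²(𝔻)` (boundary-value formulation). -/
def InH2 {ι κ : Type*} [Fintype ι] [Fintype κ] (X : Circle → Matrix ι κ ℂ) : Prop :=
  MemL2 X ∧ ∀ k : ℤ, k < 0 → mFourierCoeff X k = 0

/-- Membership in `H²(𝔻*)` (boundary-value formulation). -/
def InH2star {ι κ : Type*} [Fintype ι] [Fintype κ] (X : Circle → Matrix ι κ ℂ) : Prop :=
  MemL2 X ∧ ∀ k : ℤ, 0 < k → mFourierCoeff X k = 0

/-- The outerness condition `log |det X̂(0)| = ∫_𝕋 log |det X|`. -/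
def IsOuter {ι : Type*} [Fintype ι] [DecidableEq ι] (X : Circle → Matrix ι ι ℂ) : Prop :=
  Real.log (‖(mFourierCoeff X 0).det‖) =
    ∫ z : Circle, Real.log (‖(X z).det‖) ∂μ

/-- Pointwise conjugate transpose of a matrix-valued function. -/
def cT {ι κ : Type*} (X : Circle → Matrix ι κ ℂ) : Circle → Matrix κ ι ℂ :=
  fun z => (X z)ᴴ

/-- Entrywise a.e. measurability. -/
def AEMeas {ι κ : Type*} (X : Circle → Matrix ι κ ℂ) : Prop :=
  ∀ i j, AEMeasurable (fun z => X z i j) μ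

/-- A measurable matrix function `B : 𝕋 → 𝓒` is Szegő if `∫_𝕋 log det (Id - BB*) > -∞`,
i.e. the (a.e. nonpositive) function `log det (Id - BB*)` is integrable. -/
def Szego {n : ℕ} (B : Circle → Mat n) : Prop :=
  AEMeas B ∧ (∀ᵐ z ∂μ, Contractive (B z)) ∧
    Integrable (fun z => Real.log (‖(1 - B z * (B z)ᴴ).det‖)) μ

/-- Upper left `n × n` block of a `2n × 2n` matrix-valued function. -/
def blockA {n : ℕ} (M : Circle → Mat2 n) : Circle → Mat n := fun z => (M z).toBlocks₁₁

/-- Upper right block. -/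
def blockB {n : ℕ} (M : Circle → Mat2 n) : Circle → Mat n := fun z => (M z).toBlocks₁₂

/-- Lower left block. -/
def blockC {n : ℕ} (M : Circle → Mat2 n) : Circle → Mat n := fun z => (M z).toBlocks₂₁

/-- Lower right block. -/
def blockD {n : ℕ} (M : Circle → Mat2 n) : Circle → Mat n := fun z => (M z).toBlocks₂₂

/-- Membership in `𝐁_α`. -/
def MemB {n : ℕ} (α : Fin 2 → Fin 2) (M : Circle → Mat2 n) : Prop :=
  (∀ i j, AEMeasurable (fun z => M z i j) μ) ∧
  (∀ᵐ z ∂μ, IsSU (M z)) ∧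
  Szego (blockB M) ∧ Szego (blockC M) ∧
  InH2 (cT (blockA M)) ∧ IsOuter (cT (blockA M)) ∧
  InH2 (blockD M) ∧ IsOuter (blockD M) ∧
  Triangular (α 0) (mFourierCoeff (blockA M) 0) ∧
  Triangular (α 1) (mFourierCoeff (blockD M) 0)

open Classical in
/-- `Y_α(F)`: the unique element of `SU_α(2n)` with upper right block `F`. -/
def Yc {n : ℕ} (α : Fin 2 → Fin 2) (F : Mat n) : Mat2 n :=
  if h : ∃ M : Mat2 n, IsSUa α M ∧ M.toBlocks₁₂ = F then h.choose else 1

/-- The conjugation `Ad(w)` acting on `2n × 2n` block matrices. -/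
def Ad {n : ℕ} (w : ℂ) (M : Mat2 n) : Mat2 n :=
  Matrix.fromBlocks M.toBlocks₁₁ (w • M.toBlocks₁₂) (w⁻¹ • M.toBlocks₂₁) M.toBlocks₂₂

/-- The ordered product `∏_{j=c}^{d} Ad(z^j) Y_α(F_j)`. -/
def nlftOn {n : ℕ} (α : Fin 2 → Fin 2) (F : ℤ → Mat n) (c d : ℤ) (z : Circle) : Mat2 n :=
  (((Finset.Icc c d).sort (· ≤ ·)).map fun j => Ad ((z : ℂ) ^ j) (Yc α (F j))).prod

open Classical in
/-- A bound for the support of a finitely supported sequence. -/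
def suppBound {n : ℕ} (F : ℤ → Mat n) : ℕ :=
  if h : (Function.support F).Finite then h.toFinset.sup fun j => j.natAbs else 0

/-- The nonlinear Fourier transform `𝓕_α(F)` of a finitely supported sequence of
contractive matrices. -/
def nlft {n : ℕ} (α : Fin 2 → Fin 2) (F : ℤ → Mat n) (z : Circle) : Mat2 n :=
  nlftOn α F (-(suppBound F : ℤ)) (suppBound F : ℤ) z

/-- The metric `d` on matrix functions on the circle. -/
def metricD {n : ℕ} (M M' : Circle → Mat2 n) : ℝ :=
  Real.sqrt (∫ z : Circle, hsNorm (M z - M' z) ^ 2 ∂μ) +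
  |Real.log (‖(mFourierCoeff (blockA M) 0).det‖) -
    Real.log (‖(mFourierCoeff (blockA M') 0).det‖)|

/-- Membership in the space `𝐋_α`. -/
def MemL {n : ℕ} (α : Fin 2 → Fin 2) (M : Circle → Mat2 n) : Prop :=
  (∀ᵐ z ∂μ, IsSU (M z)) ∧
  MemL2 (blockA M) ∧ MemL2 (blockB M) ∧ MemL2 (blockC M) ∧ MemL2 (blockD M) ∧
  (∀ k : ℤ, 0 < k → mFourierCoeff (blockA M) k = 0) ∧
  (∀ k : ℤ, k < 0 → mFourierCoeff (blockD M) k = 0) ∧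
  Triangular (α 0) (mFourierCoeff (blockA M) 0) ∧
  Triangular (α 1) (mFourierCoeff (blockD M) 0)

/-- Properties (i) and (ii) in the definition of `𝐇_α⁺`. -/
def Hp12 {n : ℕ} (α : Fin 2 → Fin 2) (M : Circle → Mat2 n) : Prop :=
  InH2 (cT (blockA M)) ∧ InH2 (cT (blockC M)) ∧ InH2 (blockB M) ∧ InH2 (blockD M) ∧
  Triangular (α 0) (mFourierCoeff (blockA M) 0) ∧
  Triangular (α 1) (mFourierCoeff (blockD M) 0)

/-- Membership in the space `𝐇_α⁺`. -/
def MemHplus {n : ℕ} (α : Fin 2 → Fin 2) (M : Circle → Mat2 n) : Prop :=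
  (∀ᵐ z ∂μ, IsSU (M z)) ∧ Hp12 α M ∧
  ∀ (M' : Circle → Mat2 n) (I₁ I₂ : Circle → Mat n),
    (∀ᵐ z ∂μ, IsSU (M' z)) → Hp12 α M' →
    (∀ᵐ z ∂μ, IsUnitary (I₁ z)) → (∀ᵐ z ∂μ, IsUnitary (I₂ z)) →
    InH2 (cT I₁) → InH2 I₂ →
    (∀ᵐ z ∂μ, M z = M' z * Matrix.fromBlocks (I₁ z) 0 0 (I₂ z)) →
    (∀ᵐ z ∂μ, I₁ z = 1) ∧ (∀ᵐ z ∂μ, I₂ z = 1)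

/-- Membership in the space `𝐔_α⁺`: as `𝐇_α⁺` but with `U(2n)` in place of `SU(2n)`. -/
def MemUplus {n : ℕ} (α : Fin 2 → Fin 2) (M : Circle → Mat2 n) : Prop :=
  (∀ᵐ z ∂μ, IsUnitary (M z)) ∧ Hp12 α M ∧
  ∀ (M' : Circle → Mat2 n) (I₁ I₂ : Circle → Mat n),
    (∀ᵐ z ∂μ, IsUnitary (M' z)) → Hp12 α M' →
    (∀ᵐ z ∂μ, IsUnitary (I₁ z)) → (∀ᵐ z ∂μ, IsUnitary (I₂ z)) →
    InH2 (cT I₁) → InH2 I₂ →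
    (∀ᵐ z ∂μ, M z = M' z * Matrix.fromBlocks (I₁ z) 0 0 (I₂ z)) →
    (∀ᵐ z ∂μ, I₁ z = 1) ∧ (∀ᵐ z ∂μ, I₂ z = 1)

/-- Properties (i) and (ii) in the definition of `𝐇⁻_{α,0}`. -/
def Hm12 {n : ℕ} (α : Fin 2 → Fin 2) (M : Circle → Mat2 n) : Prop :=
  InH2 (cT (blockA M)) ∧ InH2 (blockD M) ∧
  MemL2 (blockB M) ∧ (∀ k : ℤ, 0 ≤ k → mFourierCoeff (blockB M) k = 0) ∧
  MemL2 (blockC M) ∧ (∀ k : ℤ, k ≤ 0 → mFourierCoeff (blockC M) k = 0) ∧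
  Triangular (α 0) (mFourierCoeff (blockA M) 0) ∧
  Triangular (α 1) (mFourierCoeff (blockD M) 0)

/-- Membership in the space `𝐇⁻_{α,0}`. -/
def MemHminus {n : ℕ} (α : Fin 2 → Fin 2) (M : Circle → Mat2 n) : Prop :=
  (∀ᵐ z ∂μ, IsSU (M z)) ∧ Hm12 α M ∧
  ∀ (M' : Circle → Mat2 n) (I₁ I₂ : Circle → Mat n),
    (∀ᵐ z ∂μ, IsSU (M' z)) → Hm12 α M' →
    (∀ᵐ z ∂μ, IsUnitary (I₁ z)) → (∀ᵐ z ∂μ, IsUnitary (I₂ z)) →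
    InH2 (cT I₁) → InH2 I₂ →
    (∀ᵐ z ∂μ, M z = Matrix.fromBlocks (I₁ z) 0 0 (I₂ z) * M' z) →
    (∀ᵐ z ∂μ, I₁ z = 1) ∧ (∀ᵐ z ∂μ, I₂ z = 1)

/-- Membership in `ℓ²(ℤ_{≥0}; 𝓒)`. -/
def L2Half {n : ℕ} (F : ℕ → Mat n) : Prop :=
  (∀ j, Contractive (F j)) ∧ Summable fun j => hsNorm (F j) ^ 2

/-- Membership in `ℓ²(ℤ; 𝓒)`. -/
def L2Z {n : ℕ} (F : ℤ → Mat n) : Prop :=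
  (∀ j, Contractive (F j)) ∧ Summable fun j => hsNorm (F j) ^ 2

/-- The `ℓ²` distance between two sequences. -/
def distL2Half {n : ℕ} (F F' : ℕ → Mat n) : ℝ :=
  Real.sqrt (∑' j, hsNorm (F j - F' j) ^ 2)

/-- Extension of a one-sided sequence to `ℤ` by zero. -/
def extZ {n : ℕ} (F : ℕ → Mat n) : ℤ → Mat n :=
  fun j => if 0 ≤ j then F j.toNat else 0

/-- `Φ` is a continuous extension of the NLFT `𝓕_α` to `ℓ²(ℤ_{≥0}; 𝓒)`, mapping into
`(𝐋_α, d)`. -/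
def IsNLFTExtension {n : ℕ} (α : Fin 2 → Fin 2) (Φ : (ℕ → Mat n) → Circle → Mat2 n) : Prop :=
  (∀ F : ℕ → Mat n, (∀ j, Contractive (F j)) → (Function.support F).Finite →
      ∀ᵐ z ∂μ, Φ F z = nlft α (extZ F) z) ∧
  (∀ F, L2Half F → MemL α (Φ F)) ∧
  (∀ F, L2Half F → ∀ ε : ℝ, 0 < ε → ∃ δ : ℝ, 0 < δ ∧ ∀ F', L2Half F' →
      distL2Half F F' < δ → metricD (Φ F) (Φ F') < ε)

/-- The truncation of a two-sided sequence to `[-N, N]`. -/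
def truncZ {n : ℕ} (F : ℤ → Mat n) (N : ℕ) : ℤ → Mat n :=
  fun j => if j.natAbs ≤ N then F j else 0

/-- `𝓕_α(F) = M` for a two-sided square-summable sequence `F`, formulated as convergence
in the metric `d` of the NLFTs of the truncations of `F`. -/
def NLFTeq {n : ℕ} (α : Fin 2 → Fin 2) (F : ℤ → Mat n) (M : Circle → Mat2 n) : Prop :=
  Tendsto (fun N : ℕ => metricD (nlft α (truncZ F N)) M) atTop (nhds 0)

/-!
With `λᵢ ∈ [0, ‖F‖_∞²]` the eigenvalues of `F F*` (the squared singular values of `F`),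
`‖F‖₂² = ∑ λᵢ` and `-log det (Id - F F*) = ∑ -log (1 - λᵢ)`, so both inequalities reduce to the
scalar bounds `x ≤ -log (1 - x)` for `x < 1` and `-log (1 - x) ≤ 2 x` for `0 ≤ x ≤ 1 - e⁻¹`.
-/

theorem _root_.Real.le_neg_log_one_sub {x : ℝ} (hx : x < 1) : x ≤ -Real.log (1 - x) := by
  linarith [Real.log_le_sub_one_of_pos (sub_pos.2 hx)]

/-- By concavity, `log (1 - x)` lies above its chord through `(0, 0)` and `(c, -1)`,
`c = 1 - e⁻¹`, so `-log (1 - x) ≤ x / c ≤ 2 x`. -/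
theorem _root_.Real.neg_log_one_sub_le_two_mul {x : ℝ} (h0 : 0 ≤ x)
    (h1 : x ≤ 1 - Real.exp (-1)) : -Real.log (1 - x) ≤ 2 * x := by
  set c := 1 - Real.exp (-1)
  have hc : 1 / 2 ≤ c := by
    have hexp : Real.exp (-1) ≤ 1 / 2 := by
      rw [Real.exp_neg, one_div]
      exact inv_anti₀ two_pos Real.exp_one_gt_two.le
    linarith
  have hc0 : 0 < c := by linarith
  have ht1 : x / c ≤ 1 := (div_le_one hc0).2 h1
  have hchord := strictConcaveOn_log_Ioi.concaveOn.2 (Set.mem_Ioi.2 one_pos)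
    (Set.mem_Ioi.2 (Real.exp_pos (-1))) (sub_nonneg.2 ht1) (by positivity) (sub_add_cancel 1 _)
  have hpoint : (1 - x / c) • (1 : ℝ) + (x / c) • Real.exp (-1) = 1 - x := by
    simp only [smul_eq_mul]
    field_simp
    ring
  rw [hpoint, Real.log_one, Real.log_exp, smul_eq_mul, smul_eq_mul] at hchord
  have hdiv : x / c ≤ 2 * x := by
    rw [div_le_iff₀ hc0]
    nlinarith
  linarith

open scoped Matrix.Norms.L2Operator

section Hermitian

variable {𝕜 ι : Type*} [RCLike 𝕜] [Fintype ι] [DecidableEq ι]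

theorem _root_.Matrix.IsHermitian.det_one_sub {A : Matrix ι ι 𝕜} (hA : A.IsHermitian) :
    (1 - A).det = ∏ i, (1 - (hA.eigenvalues i : 𝕜)) := by
  have hcharpoly := eval_charpoly A 1
  rw [hA.charpoly_eq, Polynomial.eval_prod] at hcharpoly
  simpa using hcharpoly.symm

theorem _root_.Matrix.IsHermitian.eigenvalues_le_l2_opNorm {A : Matrix ι ι 𝕜}
    (hA : A.IsHermitian) (i : ι) : hA.eigenvalues i ≤ ‖A‖ := by
  have hmem : (hA.eigenvalues i : 𝕜) ∈ spectrum 𝕜 A := by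
    rw [hA.spectrum_eq_image_range]
    exact ⟨_, Set.mem_range_self i, rfl⟩
  -- `NormOneClass (Matrix ι ι 𝕜)` needs `ι` nonempty
  have : Nonempty ι := ⟨i⟩
  have hle := spectrum.norm_le_norm_of_mem hmem
  rw [RCLike.norm_ofReal] at hle
  exact (le_abs_self _).trans hle

end Hermitian

theorem sq_hsNorm_eq_re_trace {ι κ : Type*} [Fintype ι] [Fintype κ] (M : Matrix ι κ ℂ) :
    hsNorm M ^ 2 = (M * Mᴴ).trace.re := by
  rw [hsNorm, Real.sq_sqrt (by positivity)]
  simp [Matrix.trace, Matrix.mul_apply, Complex.mul_conj', ← Complex.ofReal_pow]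

section ContractiveMatrix

variable {ι : Type*} [Fintype ι] [DecidableEq ι]

theorem opNorm_eq_l2_opNorm (M : Matrix ι ι ℂ) : opNorm M = ‖M‖ := rfl

theorem sq_hsNorm_eq_sum_eigenvalues (F : Matrix ι ι ℂ) :
    hsNorm F ^ 2 = ∑ i, (isHermitian_mul_conjTranspose_self F).eigenvalues i := by
  rw [sq_hsNorm_eq_re_trace, (isHermitian_mul_conjTranspose_self F).trace_eq_sum_eigenvalues]
  simp

theorem eigenvalues_mul_conjTranspose_self_le_opNorm_sq (F : Matrix ι ι ℂ) (i : ι) :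
    (isHermitian_mul_conjTranspose_self F).eigenvalues i ≤ opNorm F ^ 2 := by
  have hnorm : ‖F * Fᴴ‖ = opNorm F ^ 2 := by
    simpa [opNorm_eq_l2_opNorm, l2_opNorm_conjTranspose, ← sq] using
      l2_opNorm_conjTranspose_mul_self Fᴴ
  exact hnorm ▸ (isHermitian_mul_conjTranspose_self F).eigenvalues_le_l2_opNorm i

theorem eigenvalues_mul_conjTranspose_self_lt_one {F : Matrix ι ι ℂ} (hF : Contractive F)
    (i : ι) : (isHermitian_mul_conjTranspose_self F).eigenvalues i < 1 := by
  have h0 : 0 ≤ opNorm F := norm_nonneg _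
  have h1 : opNorm F < 1 := hF
  nlinarith [eigenvalues_mul_conjTranspose_self_le_opNorm_sq F i]

theorem neg_log_norm_det_one_sub_mul_conjTranspose_self {F : Matrix ι ι ℂ}
    (hF : Contractive F) :
    -Real.log ‖(1 - F * Fᴴ).det‖ =
      ∑ i, -Real.log (1 - (isHermitian_mul_conjTranspose_self F).eigenvalues i) := by
  have hA := isHermitian_mul_conjTranspose_self F
  have hpos i : 0 < 1 - hA.eigenvalues i :=
    sub_pos.2 (eigenvalues_mul_conjTranspose_self_lt_one hF i)
  have hnorm i : ‖1 - RCLike.ofReal (K := ℂ) (hA.eigenvalues i)‖ = 1 - hA.eigenvalues i := by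
    rw [← RCLike.ofReal_one, ← RCLike.ofReal_sub, RCLike.norm_of_nonneg (hpos i).le]
  rw [hA.det_one_sub, norm_prod, Finset.prod_congr rfl fun i _ => hnorm i,
    Real.log_prod fun i _ => (hpos i).ne', Finset.sum_neg_distrib]

end ContractiveMatrix

theorem statement_13_general (n : ℕ) (F : Mat n) (hF : Contractive F) :
    hsNorm F ^ 2 ≤ -Real.log (‖(1 - F * Fᴴ).det‖) ∧
    (opNorm F ^ 2 ≤ 1 - Real.exp (-1) →
      -Real.log (‖(1 - F * Fᴴ).det‖) ≤ 2 * hsNorm F ^ 2) := by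
  rw [sq_hsNorm_eq_sum_eigenvalues, neg_log_norm_det_one_sub_mul_conjTranspose_self hF,
    Finset.mul_sum]
  refine ⟨Finset.sum_le_sum fun i _ => ?_, fun hsmall => Finset.sum_le_sum fun i _ => ?_⟩
  · exact Real.le_neg_log_one_sub (eigenvalues_mul_conjTranspose_self_lt_one hF i)
  · exact Real.neg_log_one_sub_le_two_mul
      ((posSemidef_self_mul_conjTranspose F).eigenvalues_nonneg i)
      ((eigenvalues_mul_conjTranspose_self_le_opNorm_sq F i).trans hsmall)

/-- Comparison of the squared Hilbert–Schmidt norm with `-log det (Id - F F*)` for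
contractive matrices. -/
theorem statement_13 (n : ℕ) (hn : 1 ≤ n) (F : Mat n) (hF : Contractive F) :
    hsNorm F ^ 2 ≤ -Real.log (‖(1 - F * Fᴴ).det‖) ∧
    (opNorm F ^ 2 ≤ 1 - Real.exp (-1) →
      -Real.log (‖(1 - F * Fᴴ).det‖) ≤ 2 * hsNorm F ^ 2) :=
  statement_13_general n F hF

end NLFT
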